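/- For all integers 0 ≤ j ≤ n and all x ∈ [0,1], one has ∑_{k=j}^n (C(k,j)/C(n,j))·B_{k,n}(x,q) = ∑_{k=0}^j q^{C(k,2)}·binom_q(x,k)·[k]_q!·s_q(j,k), where binom_q(x,k) = (∏_{i=0}^{k−1} [x−i]_q)/[k]_q! is the Gaussian binomial coefficient with real upper argument x, [k]_q! = ∏_{i=1}^k [i]_q, and s_q(j,k) = (q^{−C(k,2)}/[k]_q!)·∑_{i=0}^k (−1)^i·q^{C(i,2)}·binom_q(k,i)·[k−i]_q^j is the q-Stirling number of the second kind. -/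

import Mathlib

/-- The q-number `[x]_q = (1 - q^x)/(1 - q)` for real `x`. -/
noncomputable def qNum (q x : ℝ) : ℝ := (1 - q ^ x) / (1 - q)

/-- The q-Bernstein polynomial `B_{k,n}(x,q) = C(n,k)·[x]_q^k·[1-x]_{1/q}^{n-k}`. -/
noncomputable def qBernstein (q : ℝ) (k n : ℕ) (x : ℝ) : ℝ :=
  (n.choose k : ℝ) * qNum q x ^ k * qNum q⁻¹ (1 - x) ^ (n - k)

/-- The q-factorial `[k]_q! = ∏_{i=1}^k [i]_q`. -/
noncomputable def qFact (q : ℝ) (k : ℕ) : ℝ := ∏ i ∈ Finset.Icc 1 k, qNum q (i : ℝ)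

/-- The Gaussian binomial coefficient with real upper argument:
`binom_q(a,k) = (∏_{i=0}^{k−1} [a−i]_q)/[k]_q!`. -/
noncomputable def qBinom (q a : ℝ) (k : ℕ) : ℝ :=
  (∏ i ∈ Finset.range k, qNum q (a - (i : ℝ))) / qFact q k

/-- The q-Stirling numbers of the second kind:
`s_q(n,k) = (q^{−C(k,2)}/[k]_q!)·∑_{j=0}^k (−1)^j·q^{C(j,2)}·binom_q(k,j)·[k−j]_q^n`. -/
noncomputable def qStirling (q : ℝ) (n k : ℕ) : ℝ :=
  ((q ^ (k.choose 2))⁻¹ / qFact q k) *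
    ∑ j ∈ Finset.range (k + 1),
      (-1 : ℝ) ^ j * q ^ (j.choose 2) * qBinom q (k : ℝ) j * qNum q ((k : ℝ) - (j : ℝ)) ^ n

/-!
Since `[1-x]_{1/q} = 1 - [x]_q`, the left side is the classical identity
`∑_k C(k,j) C(n,k) t^k (1-t)^(n-k) = C(n,j) t^j` at `t = [x]_q`, so both sides should equal `[x]_q^j`.
On the right, `q^C(k,2) binom_q(x,k) [k]_q! = ∏_{i<k} ([x]_q - [i]_q)`, so the claim is that the
`s_q(j,k)` are the coefficients of `t^j` in the Newton basis `∏_{i<k} (t - [i]_q)`. This follows by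
induction on `j` from `t ∏_{i<k} (t - [i]_q) = ∏_{i≤k} (t - [i]_q) + [k]_q ∏_{i<k} (t - [i]_q)` once
`s_q(j+1,k+1) = s_q(j,k) + [k+1]_q s_q(j,k+1)` and `s_q(j,k) = 0` for `k > j` are known. The recurrence
comes from splitting `[k+1-i]_q = [k+1]_q - q^(k+1-i) [i]_q` and absorbing `[i]_q` into `binom_q(k+1,i)`;
the vanishing reduces to `j = 0`, where it is the alternating sum `∑_i (-1)^i q^C(i,2) binom_q(k,i) = 0`,
which telescopes by the `q`-Pascal rule.
-/

open Finset

theorem sum_Icc_choose_mul_bernstein {R : Type*} [CommRing R] (n j : ℕ) (t : R) :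
    ∑ k ∈ Icc j n, (k.choose j : R) * (n.choose k * t ^ k * (1 - t) ^ (n - k))
      = n.choose j * t ^ j := by
  rcases lt_or_ge n j with hnj | hjn
  · simp [Icc_eq_empty_of_lt hnj, Nat.choose_eq_zero_of_lt hnj]
  have hchoose : ∀ k ∈ Icc j n, (k.choose j : R) * (n.choose k * t ^ k * (1 - t) ^ (n - k))
      = n.choose j * t ^ j * (t ^ (k - j) * (1 - t) ^ (n - j - (k - j)) * (n - j).choose (k - j)) := by
    intro k hk
    have hjk := (mem_Icc.1 hk).1
    have := congrArg (Nat.cast (R := R)) (@Nat.choose_mul n k j hjk)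
    push_cast at this
    rw [← pow_mul_pow_sub t hjk, show n - j - (k - j) = n - k by omega]
    linear_combination (t ^ j * t ^ (k - j) * (1 - t) ^ (n - k)) * this
  rw [sum_congr rfl hchoose, ← mul_sum, ← Ico_add_one_right_eq_Icc, sum_Ico_eq_sum_range,
    show n + 1 - j = n - j + 1 by omega]
  simp only [Nat.add_sub_cancel_left]
  rw [← add_pow, add_sub_cancel, one_pow, mul_one]

section QNumbers

variable {q : ℝ}

theorem qNum_zero : qNum q 0 = 0 := by simp [qNum]

theorem qNum_add (hq : 0 < q) (a b : ℝ) : qNum q (a + b) = qNum q a + q ^ a * qNum q b := by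
  simp only [qNum, Real.rpow_add hq]
  ring

theorem pow_mul_qNum_sub (hq : 0 < q) (a : ℝ) (i : ℕ) :
    q ^ i * qNum q (a - i) = qNum q a - qNum q i := by
  have h := qNum_add hq i (a - i)
  rw [add_sub_cancel, Real.rpow_natCast] at h
  linarith

theorem qNum_pos (hq : 0 < q) (hq1 : q ≠ 1) {a : ℝ} (ha : 0 < a) : 0 < qNum q a := by
  rcases hq1.lt_or_gt with h | h
  · exact div_pos (by linarith [Real.rpow_lt_one hq.le h ha]) (by linarith)
  · exact div_pos_of_neg_of_neg (by linarith [Real.one_lt_rpow h ha]) (by linarith)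

theorem qNum_inv_one_sub (hq : 0 < q) (hq1 : q ≠ 1) (x : ℝ) :
    qNum q⁻¹ (1 - x) = 1 - qNum q x := by
  have h1 : 1 - q ≠ 0 := sub_ne_zero.2 hq1.symm
  have h2 : q - 1 ≠ 0 := sub_ne_zero.2 hq1
  simp only [qNum, Real.inv_rpow hq.le, Real.rpow_sub hq, Real.rpow_one]
  field_simp
  ring

theorem qFact_succ (k : ℕ) : qFact q (k + 1) = qFact q k * qNum q (k + 1) := by
  rw [qFact, prod_Icc_succ_top (by omega), ← qFact, Nat.cast_succ]

theorem qFact_ne_zero (hq : 0 < q) (hq1 : q ≠ 1) (k : ℕ) : qFact q k ≠ 0 :=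
  prod_ne_zero_iff.2 fun _ hi =>
    (qNum_pos hq hq1 (Nat.cast_pos.2 (mem_Icc.1 hi).1)).ne'

end QNumbers

section GaussianBinomial

variable {q : ℝ}

theorem qBinom_zero_right (a : ℝ) : qBinom q a 0 = 1 := by simp [qBinom, qFact]

theorem qBinom_nat_succ_self (k : ℕ) : qBinom q k (k + 1) = 0 := by
  rw [qBinom, prod_eq_zero (mem_range.2 k.lt_succ_self) (by rw [sub_self, qNum_zero]), zero_div]

theorem qBinom_succ_mul_qNum (hq : 0 < q) (hq1 : q ≠ 1) (a : ℝ) (i : ℕ) :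
    qBinom q a (i + 1) * qNum q (i + 1) = qBinom q a i * qNum q (a - i) := by
  have := qFact_ne_zero hq hq1 i
  have := (qNum_pos hq hq1 (by positivity : (0 : ℝ) < i + 1)).ne'
  simp only [qBinom, prod_range_succ, qFact_succ]
  field_simp

theorem qBinom_add_one_succ_mul_qNum (hq : 0 < q) (hq1 : q ≠ 1) (a : ℝ) (i : ℕ) :
    qBinom q (a + 1) (i + 1) * qNum q (i + 1) = qNum q (a + 1) * qBinom q a i := by
  have := qFact_ne_zero hq hq1 i
  have := (qNum_pos hq hq1 (by positivity : (0 : ℝ) < i + 1)).ne'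
  have hshift : ∀ l : ℕ, qNum q (a + 1 - ((l + 1 : ℕ) : ℝ)) = qNum q (a - l) := fun l => by
    push_cast; ring_nf
  simp only [qBinom, prod_range_succ', hshift, qFact_succ, Nat.cast_zero, sub_zero]
  field_simp

theorem qBinom_add_one_succ (hq : 0 < q) (hq1 : q ≠ 1) (a : ℝ) (i : ℕ) :
    qBinom q (a + 1) (i + 1) = q ^ (i + 1) * qBinom q a (i + 1) + qBinom q a i := by
  have hi := (qNum_pos hq hq1 (by positivity : (0 : ℝ) < i + 1)).ne'
  have hsplit : qNum q (a + 1) = q ^ (i + 1) * qNum q (a - i) + qNum q (i + 1) := by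
    have := pow_mul_qNum_sub hq (a + 1) (i + 1)
    push_cast at this
    rw [show a + 1 - (i + 1) = a - i by ring] at this
    linarith
  apply mul_right_cancel₀ hi
  rw [qBinom_add_one_succ_mul_qNum hq hq1, add_mul, mul_assoc, qBinom_succ_mul_qNum hq hq1,
    hsplit]
  ring

theorem sum_range_neg_one_pow_mul_qBinom_add_one (hq : 0 < q) (hq1 : q ≠ 1) (a : ℝ) (m : ℕ) :
    ∑ i ∈ range (m + 1), (-1 : ℝ) ^ i * q ^ i.choose 2 * qBinom q (a + 1) i
      = (-1) ^ m * q ^ (m + 1).choose 2 * qBinom q a m := by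
  induction m with
  | zero => simp [qBinom_zero_right]
  | succ m ih =>
    rw [sum_range_succ, ih, qBinom_add_one_succ hq hq1, Nat.choose_succ_succ' (m + 1),
      Nat.choose_one_right, pow_add, pow_succ]
    ring

theorem sum_range_neg_one_pow_mul_qBinom_nat_succ (hq : 0 < q) (hq1 : q ≠ 1) (k : ℕ) :
    ∑ i ∈ range (k + 2), (-1 : ℝ) ^ i * q ^ i.choose 2 * qBinom q ((k + 1 : ℕ) : ℝ) i = 0 := by
  rw [Nat.cast_succ, sum_range_neg_one_pow_mul_qBinom_add_one hq hq1, qBinom_nat_succ_self,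
    mul_zero]

end GaussianBinomial

noncomputable def qStirlingSum (q : ℝ) (j k : ℕ) : ℝ :=
  ∑ i ∈ range (k + 1),
    (-1 : ℝ) ^ i * q ^ (i.choose 2) * qBinom q (k : ℝ) i * qNum q ((k : ℝ) - (i : ℝ)) ^ j

section QStirling

variable {q : ℝ}

theorem qStirling_eq (j k : ℕ) :
    qStirling q j k = (q ^ k.choose 2)⁻¹ / qFact q k * qStirlingSum q j k := rfl

theorem qStirlingSum_succ_succ (hq : 0 < q) (hq1 : q ≠ 1) (j k : ℕ) :
    qStirlingSum q (j + 1) (k + 1)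
      = qNum q (k + 1) * qStirlingSum q j (k + 1) + q ^ k * qNum q (k + 1) * qStirlingSum q j k := by
  have hsplit : ∀ i : ℕ, qNum q ((k + 1 : ℕ) - i)
      = qNum q (k + 1) - q ^ ((k + 1 : ℝ) - i) * qNum q i := fun i => by
    have := qNum_add hq ((k + 1 : ℝ) - i) i
    push_cast
    rw [sub_add_cancel] at this
    linarith
  have hshift : ∑ i ∈ range (k + 2), (-1 : ℝ) ^ i * q ^ i.choose 2 * qBinom q ((k + 1 : ℕ) : ℝ) i
        * qNum q ((k + 1 : ℕ) - i) ^ j * (q ^ ((k + 1 : ℝ) - i) * qNum q i)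
      = -(q ^ k * qNum q (k + 1) * qStirlingSum q j k) := by
    simp only [sum_range_succ' _ (k + 1), Nat.cast_zero, qNum_zero, mul_zero, add_zero]
    rw [qStirlingSum, mul_sum, ← sum_neg_distrib]
    refine sum_congr rfl fun i _ => ?_
    have habs := qBinom_add_one_succ_mul_qNum hq hq1 (k : ℝ) i
    have hpow : q ^ ((k : ℝ) - i) * q ^ i = q ^ k := by
      rw [← Real.rpow_natCast, ← Real.rpow_natCast, ← Real.rpow_add hq, sub_add_cancel]
    push_cast at habs ⊢
    rw [show (k : ℝ) + 1 - (i + 1) = k - i by ring, Nat.choose_succ_succ', Nat.choose_one_right,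
      pow_add, ← hpow]
    linear_combination
      ((-1) ^ (i + 1) * q ^ i * q ^ i.choose 2 * q ^ ((k : ℝ) - i) * qNum q (k - i) ^ j) * habs
  have hexpand : qStirlingSum q (j + 1) (k + 1) = qNum q (k + 1) * qStirlingSum q j (k + 1)
      - ∑ i ∈ range (k + 2), (-1 : ℝ) ^ i * q ^ i.choose 2 * qBinom q ((k + 1 : ℕ) : ℝ) i
        * qNum q ((k + 1 : ℕ) - i) ^ j * (q ^ ((k + 1 : ℝ) - i) * qNum q i) := by
    rw [qStirlingSum, qStirlingSum, mul_sum, ← sum_sub_distrib]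
    refine sum_congr rfl fun i _ => ?_
    rw [pow_succ, hsplit]
    ring
  rw [hexpand, hshift]
  ring

theorem qStirlingSum_eq_zero_of_lt (hq : 0 < q) (hq1 : q ≠ 1) {j k : ℕ} (h : j < k) :
    qStirlingSum q j k = 0 := by
  induction j generalizing k with
  | zero =>
    obtain ⟨k, rfl⟩ := Nat.exists_eq_add_of_lt h
    simpa [qStirlingSum] using sum_range_neg_one_pow_mul_qBinom_nat_succ hq hq1 k
  | succ j ih =>
    obtain ⟨k, rfl⟩ := Nat.exists_eq_add_of_lt h
    rw [qStirlingSum_succ_succ hq hq1, ih (by omega), ih (by omega)]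
    ring

theorem qStirling_zero_zero : qStirling q 0 0 = 1 := by
  simp [qStirling, qFact, qBinom_zero_right]

theorem qStirling_succ_zero (j : ℕ) : qStirling q (j + 1) 0 = 0 := by
  simp [qStirling, qNum_zero]

theorem qStirling_eq_zero_of_lt (hq : 0 < q) (hq1 : q ≠ 1) {j k : ℕ} (h : j < k) :
    qStirling q j k = 0 := by
  rw [qStirling_eq, qStirlingSum_eq_zero_of_lt hq hq1 h, mul_zero]

theorem qStirling_succ_succ (hq : 0 < q) (hq1 : q ≠ 1) (j k : ℕ) :
    qStirling q (j + 1) (k + 1) = qStirling q j k + qNum q (k + 1) * qStirling q j (k + 1) := by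
  have := qFact_ne_zero hq hq1 k
  have := (qNum_pos hq hq1 (by positivity : (0 : ℝ) < k + 1)).ne'
  have := hq.ne'
  simp only [qStirling_eq, qStirlingSum_succ_succ hq hq1, qFact_succ, Nat.choose_succ_succ',
    Nat.choose_one_right, pow_add]
  field_simp
  ring

theorem sum_qStirling_mul_prod_sub_qNum (hq : 0 < q) (hq1 : q ≠ 1) (j : ℕ) (t : ℝ) :
    ∑ k ∈ range (j + 1), qStirling q j k * ∏ i ∈ range k, (t - qNum q i) = t ^ j := by
  induction j with
  | zero => simp [qStirling_zero_zero]
  | succ j ih =>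
    set P : ℕ → ℝ := fun k => ∏ i ∈ range k, (t - qNum q i)
    set g : ℕ → ℝ := fun k => qNum q k * qStirling q j k * P k
    have hP : ∀ k, t * P k = P (k + 1) + qNum q k * P k := fun k => by
      simp only [P, prod_range_succ]
      ring
    have hg : ∑ k ∈ range (j + 1), g (k + 1) = ∑ k ∈ range (j + 1), g k := by
      have h0 : g 0 = 0 := by simp [g, qNum_zero]
      have hj : g (j + 1) = 0 := by simp [g, qStirling_eq_zero_of_lt hq hq1 j.lt_succ_self]
      rw [← add_zero (∑ k ∈ range (j + 1), g (k + 1)), ← h0, ← sum_range_succ', sum_range_succ,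
        hj, add_zero]
    calc ∑ k ∈ range (j + 2), qStirling q (j + 1) k * P k
        = ∑ k ∈ range (j + 1), (qStirling q j k * P (k + 1) + g (k + 1)) := by
          simp only [sum_range_succ' _ (j + 1), qStirling_succ_zero, zero_mul, add_zero,
            qStirling_succ_succ hq hq1, g, Nat.cast_succ]
          exact sum_congr rfl fun k _ => by ring
      _ = ∑ k ∈ range (j + 1), (qStirling q j k * P (k + 1) + g k) := by
          rw [sum_add_distrib, sum_add_distrib, hg]
      _ = t * ∑ k ∈ range (j + 1), qStirling q j k * P k := by
          rw [mul_sum]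
          exact sum_congr rfl fun k _ => by rw [mul_left_comm, hP]; ring
      _ = t ^ (j + 1) := by rw [ih, pow_succ']

theorem pow_choose_two_mul_qBinom_mul_qFact (hq : 0 < q) (hq1 : q ≠ 1) (x : ℝ) (k : ℕ) :
    q ^ k.choose 2 * qBinom q x k * qFact q k = ∏ i ∈ range k, (qNum q x - qNum q i) := by
  have hpow : q ^ k.choose 2 = ∏ i ∈ range k, q ^ i := by
    rw [prod_pow_eq_pow_sum, sum_range_id, Nat.choose_two_right]
  rw [qBinom, mul_assoc, div_mul_cancel₀ _ (qFact_ne_zero hq hq1 k), hpow, ← prod_mul_distrib]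
  exact prod_congr rfl fun i _ => pow_mul_qNum_sub hq x i

end QStirling

theorem qBernstein_qStirling_general (q : ℝ) (hq : 0 < q) (hq1 : q < 1)
    (n j : ℕ) (hj : j ≤ n) (x : ℝ) :
    ∑ k ∈ Finset.Icc j n, ((k.choose j : ℝ) / (n.choose j : ℝ)) * qBernstein q k n x
      = ∑ k ∈ Finset.range (j + 1),
          q ^ (k.choose 2) * qBinom q x k * qFact q k * qStirling q j k := by
  have hq1' : q ≠ 1 := hq1.ne
  have hnj : (n.choose j : ℝ) ≠ 0 := Nat.cast_ne_zero.2 (Nat.choose_pos hj).ne'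
  have hlhs : ∑ k ∈ Icc j n, ((k.choose j : ℝ) / (n.choose j : ℝ)) * qBernstein q k n x
      = qNum q x ^ j := by
    simp only [qBernstein, qNum_inv_one_sub hq hq1', div_mul_eq_mul_div, ← sum_div,
      sum_Icc_choose_mul_bernstein, mul_div_cancel_left₀ _ hnj]
  have hrhs : ∑ k ∈ range (j + 1), q ^ k.choose 2 * qBinom q x k * qFact q k * qStirling q j k
      = qNum q x ^ j := by
    simp only [pow_choose_two_mul_qBinom_mul_qFact hq hq1', mul_comm _ (qStirling q j _),
      sum_qStirling_mul_prod_sub_qNum hq hq1']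
  rw [hlhs, hrhs]

/-- `∑_{k=j}^n (C(k,j)/C(n,j))·B_{k,n}(x,q)
  = ∑_{k=0}^j q^{C(k,2)}·binom_q(x,k)·[k]_q!·s_q(j,k)`. -/
theorem qBernstein_qStirling (q : ℝ) (hq : 0 < q) (hq1 : q < 1)
    (n j : ℕ) (hj : j ≤ n) (x : ℝ) (hx : x ∈ Set.Icc (0 : ℝ) 1) :
    ∑ k ∈ Finset.Icc j n, ((k.choose j : ℝ) / (n.choose j : ℝ)) * qBernstein q k n x
      = ∑ k ∈ Finset.range (j + 1),
          q ^ (k.choose 2) * qBinom q x k * qFact q k * qStirling q j k :=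
  qBernstein_qStirling_general q hq hq1 n j hj x
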